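/- arXiv:2012.10713 — 5 statements merged into one kernel-verified Lean document; each statement's English description precedes it below -/
import Mathlib

section
/- Let y, a be nonzero vectors in ℝ^d and Σ a positive definite matrix. Consider the semidefinite program: maximize ⟨y, V y⟩ over symmetric matrices V subject to 0 ⪯ V ⪯ Σ and ⟨a, V a⟩ = 0. Its optimal value equals ⟨y, Σ y⟩ − ⟨a, Σ y⟩² / ⟨a, Σ a⟩. -/
/-!
If `0 ⪯ V` and `⟨a, V a⟩ = 0` then `V a = 0`, so the Cauchy–Schwarz inequality for the
semidefinite form of `S - V`, taken at `a` and `y`, reads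
`⟨a, S y⟩² ≤ ⟨a, S a⟩ (⟨y, S y⟩ - ⟨y, V y⟩)`. The bound is attained by the conditional
covariance `S - (S a)(S a)ᵀ / ⟨a, S a⟩`, which is positive semidefinite by Cauchy–Schwarz for `S`.
-/

open Matrix

namespace Matrix

variable {n : Type*}

lemma PosSemidef.isSymm {M : Matrix n n ℝ} (hM : M.PosSemidef) : M.IsSymm :=
  isHermitian_iff_isSymm.mp hM.isHermitian

variable [Fintype n]

lemma IsSymm.dotProduct_mulVec_comm {R : Type*} [CommSemiring R] {M : Matrix n n R}
    (hM : M.IsSymm) (x z : n → R) : x ⬝ᵥ M *ᵥ z = z ⬝ᵥ M *ᵥ x := by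
  rw [← dotProduct_transpose_mulVec, hM.eq]

namespace PosSemidef

variable {M : Matrix n n ℝ}

lemma sq_dotProduct_mulVec_le (hM : M.PosSemidef) (x z : n → ℝ) :
    (x ⬝ᵥ M *ᵥ z) ^ 2 ≤ (x ⬝ᵥ M *ᵥ x) * (z ⬝ᵥ M *ᵥ z) := by
  have hquad : ∀ t : ℝ,
      0 ≤ (z ⬝ᵥ M *ᵥ z) * (t * t) + 2 * (x ⬝ᵥ M *ᵥ z) * t + x ⬝ᵥ M *ᵥ x := by
    intro t
    have h := hM.dotProduct_mulVec_nonneg (x + t • z)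
    simp only [star_trivial, mulVec_add, mulVec_smul, dotProduct_add, add_dotProduct,
      dotProduct_smul, smul_dotProduct, smul_eq_mul, hM.isSymm.dotProduct_mulVec_comm z x] at h
    linarith
  have := discrim_le_zero hquad
  rw [discrim] at this
  linarith

lemma sq_dotProduct_mulVec_div_le (hM : M.PosSemidef) (x z : n → ℝ) :
    (x ⬝ᵥ M *ᵥ z) ^ 2 / (x ⬝ᵥ M *ᵥ x) ≤ z ⬝ᵥ M *ᵥ z := by
  rcases (by simpa using hM.dotProduct_mulVec_nonneg x : 0 ≤ x ⬝ᵥ M *ᵥ x).eq_or_lt with h | h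
  · simpa [← h] using hM.dotProduct_mulVec_nonneg z
  · rw [div_le_iff₀' h]
    exact hM.sq_dotProduct_mulVec_le x z

end PosSemidef

/-- The covariance of `X` conditioned on `⟨a, X⟩` when `Cov X = S`; equivalently
`S^{1/2} (1 - a₀ a₀ᵀ) S^{1/2}` with `a₀` the unit vector along `S^{1/2} a`. -/
noncomputable def condCov (S : Matrix n n ℝ) (a : n → ℝ) : Matrix n n ℝ :=
  S - (a ⬝ᵥ S *ᵥ a)⁻¹ • vecMulVec (S *ᵥ a) (S *ᵥ a)

variable (S : Matrix n n ℝ) (a : n → ℝ)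

lemma dotProduct_condCov_mulVec (x z : n → ℝ) :
    x ⬝ᵥ condCov S a *ᵥ z = x ⬝ᵥ S *ᵥ z - (x ⬝ᵥ S *ᵥ a) * (z ⬝ᵥ S *ᵥ a) / (a ⬝ᵥ S *ᵥ a) := by
  simp only [condCov, sub_mulVec, smul_mulVec, vecMulVec_mulVec, op_smul_eq_smul, dotProduct_sub,
    dotProduct_smul, smul_eq_mul, dotProduct_comm (S *ᵥ a) z]
  ring

lemma dotProduct_condCov_mulVec_self : a ⬝ᵥ condCov S a *ᵥ a = 0 := by
  rw [dotProduct_condCov_mulVec, mul_self_div_self, sub_self]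

variable {S}

lemma PosSemidef.sub_condCov (hS : S.PosSemidef) : (S - condCov S a).PosSemidef := by
  rw [condCov, sub_sub_cancel]
  have hc : 0 ≤ a ⬝ᵥ S *ᵥ a := by simpa using hS.dotProduct_mulVec_nonneg a
  simpa using (posSemidef_vecMulVec_self_star (S *ᵥ a)).smul (inv_nonneg.mpr hc)

lemma PosSemidef.condCov (hS : S.PosSemidef) : (condCov S a).PosSemidef := by
  have hHerm := hS.isHermitian.sub (hS.sub_condCov a).isHermitian
  rw [sub_sub_cancel] at hHerm
  refine .of_dotProduct_mulVec_nonneg hHerm fun x => ?_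
  have := hS.sq_dotProduct_mulVec_div_le a x
  rw [star_trivial, dotProduct_condCov_mulVec, ← sq, hS.isSymm.dotProduct_mulVec_comm x a]
  linarith

lemma PosSemidef.dotProduct_mulVec_le_of_mulVec_eq_zero {V : Matrix n n ℝ} (hV : V.PosSemidef)
    (hSV : (S - V).PosSemidef) (hVa : V *ᵥ a = 0) (y : n → ℝ) :
    y ⬝ᵥ V *ᵥ y ≤ y ⬝ᵥ S *ᵥ y - (a ⬝ᵥ S *ᵥ y) ^ 2 / (a ⬝ᵥ S *ᵥ a) := by
  have haVy : a ⬝ᵥ V *ᵥ y = 0 := by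
    rw [hV.isSymm.dotProduct_mulVec_comm, hVa, dotProduct_zero]
  have := hSV.sq_dotProduct_mulVec_div_le a y
  simp only [sub_mulVec, dotProduct_sub, haVy, hVa, sub_zero] at this
  linarith

end Matrix

theorem sdp_max_var_under_invariance_general {d : ℕ} (y a : Fin d → ℝ)
    (S : Matrix (Fin d) (Fin d) ℝ) (hS : S.PosDef) :
    IsGreatest
      {x : ℝ | ∃ V : Matrix (Fin d) (Fin d) ℝ,
        V.PosSemidef ∧ (S - V).PosSemidef ∧ a ⬝ᵥ V.mulVec a = 0 ∧
        x = y ⬝ᵥ V.mulVec y}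
      (y ⬝ᵥ S.mulVec y - (a ⬝ᵥ S.mulVec y) ^ 2 / (a ⬝ᵥ S.mulVec a)) := by
  replace hS := hS.posSemidef
  refine ⟨⟨condCov S a, hS.condCov a, hS.sub_condCov a, dotProduct_condCov_mulVec_self S a, ?_⟩, ?_⟩
  · rw [dotProduct_condCov_mulVec, ← sq, hS.isSymm.dotProduct_mulVec_comm y a]
  · rintro _ ⟨V, hV, hSV, haVa, rfl⟩
    have hVa : V *ᵥ a = 0 := (hV.dotProduct_mulVec_zero_iff a).mp (by simpa using haVa)
    exact hV.dotProduct_mulVec_le_of_mulVec_eq_zero a hSV hVa y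

/-- SDP: maximize `⟨y, V y⟩` subject to `0 ⪯ V ⪯ Σ` and `⟨a, V a⟩ = 0`.
The optimal value is `⟨y, Σ y⟩ − ⟨a, Σ y⟩²/⟨a, Σ a⟩`. -/
theorem sdp_max_var_under_invariance {d : ℕ} (y a : Fin d → ℝ)
    (hy : y ≠ 0) (ha : a ≠ 0)
    (S : Matrix (Fin d) (Fin d) ℝ) (hS : S.PosDef) :
    IsGreatest
      {x : ℝ | ∃ V : Matrix (Fin d) (Fin d) ℝ,
        V.PosSemidef ∧ (S - V).PosSemidef ∧ a ⬝ᵥ V.mulVec a = 0 ∧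
        x = y ⬝ᵥ V.mulVec y}
      (y ⬝ᵥ S.mulVec y - (a ⬝ᵥ S.mulVec y) ^ 2 / (a ⬝ᵥ S.mulVec a)) :=
  sdp_max_var_under_invariance_general y a S hS
end

section
/- Let y, a be nonzero vectors in ℝ^d and Σ a positive definite matrix. Consider the semidefinite program: minimize ⟨a, V a⟩ over symmetric matrices V subject to 0 ⪯ V ⪯ Σ and ⟨y, V y⟩ = ⟨y, Σ y⟩. Its optimal value equals ⟨a, Σ y⟩² / ⟨y, Σ y⟩. -/
open Matrix

/-!
If `0 ⪯ V ⪯ Σ` and `⟨y, V y⟩ = ⟨y, Σ y⟩`, then `Σ - V` is positive semidefinite with `y` in the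
kernel of its quadratic form, hence `V y = Σ y`. Cauchy–Schwarz for the form of `V` then gives
`⟨a, Σ y⟩² = ⟨a, V y⟩² ≤ ⟨a, V a⟩ ⟨y, Σ y⟩`. The bound is attained by the rank-one matrix
`Σ y (Σ y)ᵀ / ⟨y, Σ y⟩`, which lies below `Σ` by Cauchy–Schwarz for the form of `Σ`.
-/

namespace Matrix

variable {n : Type*} [Fintype n]

theorem dotProduct_vecMulVec_mulVec {α : Type*} [CommSemiring α] (x u v w : n → α) :
    x ⬝ᵥ vecMulVec u v *ᵥ w = (x ⬝ᵥ u) * (v ⬝ᵥ w) := by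
  rw [vecMulVec_mulVec, op_smul_eq_smul, dotProduct_smul, smul_eq_mul, mul_comm]

theorem PosSemidef.sq_dotProduct_mulVec_le_s7 {M : Matrix n n ℝ} (hM : M.PosSemidef) (x z : n → ℝ) :
    (x ⬝ᵥ M *ᵥ z) ^ 2 ≤ (x ⬝ᵥ M *ᵥ x) * (z ⬝ᵥ M *ᵥ z) := by
  let := M.toSeminormedAddCommGroup hM
  let := M.toInnerProductSpace hM
  have hinner (u v : n → ℝ) : inner ℝ u v = u ⬝ᵥ M *ᵥ v := dotProduct_comm _ _
  simpa only [hinner, sq] using real_inner_mul_inner_self_le x z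

theorem PosSemidef.mulVec_eq_of_dotProduct_mulVec_eq {S V : Matrix n n ℝ}
    (hSV : (S - V).PosSemidef) {y : n → ℝ} (h : y ⬝ᵥ V *ᵥ y = y ⬝ᵥ S *ᵥ y) :
    V *ᵥ y = S *ᵥ y := by
  have h₀ : star y ⬝ᵥ (S - V) *ᵥ y = 0 := by
    rw [star_trivial, sub_mulVec, dotProduct_sub, h, sub_self]
  rw [eq_comm, ← sub_eq_zero, ← sub_mulVec]
  exact (hSV.dotProduct_mulVec_zero_iff y).mp h₀

/-- In the paper's notation this is `Σ^{1/2} (y₀' ⊗ y₀') Σ^{1/2}` with `y₀'` the unit vector along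
`Σ^{1/2} y`. -/
noncomputable def rankOneCompression (S : Matrix n n ℝ) (y : n → ℝ) : Matrix n n ℝ :=
  (y ⬝ᵥ S *ᵥ y)⁻¹ • vecMulVec (S *ᵥ y) (S *ᵥ y)

theorem dotProduct_rankOneCompression_mulVec_self (S : Matrix n n ℝ) (x y : n → ℝ) :
    x ⬝ᵥ rankOneCompression S y *ᵥ x = (x ⬝ᵥ S *ᵥ y) ^ 2 / (y ⬝ᵥ S *ᵥ y) := by
  rw [rankOneCompression, smul_mulVec, dotProduct_smul, dotProduct_vecMulVec_mulVec,
    dotProduct_comm (S *ᵥ y) x, smul_eq_mul, sq, inv_mul_eq_div]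

theorem PosSemidef.sq_dotProduct_mulVec_div_le_s7 {S : Matrix n n ℝ} (hS : S.PosSemidef)
    (x y : n → ℝ) : (x ⬝ᵥ S *ᵥ y) ^ 2 / (y ⬝ᵥ S *ᵥ y) ≤ x ⬝ᵥ S *ᵥ x :=
  div_le_of_le_mul₀ (by simpa using hS.dotProduct_mulVec_nonneg y)
    (by simpa using hS.dotProduct_mulVec_nonneg x) (hS.sq_dotProduct_mulVec_le_s7 x y)

theorem posSemidef_rankOneCompression {S : Matrix n n ℝ} (hS : S.PosSemidef) (y : n → ℝ) :
    (rankOneCompression S y).PosSemidef :=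
  (posSemidef_vecMulVec_self_star (S *ᵥ y)).smul
    (inv_nonneg.mpr (by simpa using hS.dotProduct_mulVec_nonneg y))

theorem posSemidef_sub_rankOneCompression {S : Matrix n n ℝ} (hS : S.PosSemidef) (y : n → ℝ) :
    (S - rankOneCompression S y).PosSemidef := by
  refine .of_dotProduct_mulVec_nonneg
    (hS.isHermitian.sub (posSemidef_rankOneCompression hS y).isHermitian) fun x => ?_
  rw [star_trivial, sub_mulVec, dotProduct_sub, dotProduct_rankOneCompression_mulVec_self,
    sub_nonneg]
  exact hS.sq_dotProduct_mulVec_div_le_s7 x y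

end Matrix

theorem sdp_min_var_under_sufficiency_general {d : ℕ} (y a : Fin d → ℝ)
    (S : Matrix (Fin d) (Fin d) ℝ) (hS : S.PosDef) :
    IsLeast
      {x : ℝ | ∃ V : Matrix (Fin d) (Fin d) ℝ,
        V.PosSemidef ∧ (S - V).PosSemidef ∧ y ⬝ᵥ V.mulVec y = y ⬝ᵥ S.mulVec y ∧
        x = a ⬝ᵥ V.mulVec a}
      ((a ⬝ᵥ S.mulVec y) ^ 2 / (y ⬝ᵥ S.mulVec y)) := by
  have hS₀ := hS.posSemidef
  refine ⟨⟨rankOneCompression S y, posSemidef_rankOneCompression hS₀ y,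
    posSemidef_sub_rankOneCompression hS₀ y, ?_, ?_⟩, ?_⟩
  · rw [dotProduct_rankOneCompression_mulVec_self, sq, mul_self_div_self]
  · rw [dotProduct_rankOneCompression_mulVec_self]
  · rintro _ ⟨V, hV, hSV, hyV, rfl⟩
    have hVy : V *ᵥ y = S *ᵥ y := hSV.mulVec_eq_of_dotProduct_mulVec_eq hyV
    calc (a ⬝ᵥ S *ᵥ y) ^ 2 / (y ⬝ᵥ S *ᵥ y) = (a ⬝ᵥ V *ᵥ y) ^ 2 / (y ⬝ᵥ V *ᵥ y) := by
          rw [hVy]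
      _ ≤ a ⬝ᵥ V *ᵥ a := hV.sq_dotProduct_mulVec_div_le_s7 a y

/-- SDP: minimize `⟨a, V a⟩` subject to `0 ⪯ V ⪯ Σ` and `⟨y, V y⟩ = ⟨y, Σ y⟩`.
The optimal value is `⟨a, Σ y⟩²/⟨y, Σ y⟩`. -/
theorem sdp_min_var_under_sufficiency {d : ℕ} (y a : Fin d → ℝ)
    (hy : y ≠ 0) (ha : a ≠ 0)
    (S : Matrix (Fin d) (Fin d) ℝ) (hS : S.PosDef) :
    IsLeast
      {x : ℝ | ∃ V : Matrix (Fin d) (Fin d) ℝ,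
        V.PosSemidef ∧ (S - V).PosSemidef ∧ y ⬝ᵥ V.mulVec y = y ⬝ᵥ S.mulVec y ∧
        x = a ⬝ᵥ V.mulVec a}
      ((a ⬝ᵥ S.mulVec y) ^ 2 / (y ⬝ᵥ S.mulVec y)) :=
  sdp_min_var_under_sufficiency_general y a S hS
end

section
/- Let f, g : Ω → ℝ be square-integrable random variables and Z any random variable. Then Var E[f|Z] − Var E[g|Z] ≤ ½[ Var f − Var g + √( (Var f + Var g)² − 4 Cov(f,g)² ) ]. -/
/-!
Condition on the σ-algebra `m` generated by `Z` and split `f = f̂ + r` with `f̂ = E[f | m]`,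
and `g = ĝ + s` likewise. The residuals are uncorrelated with every `m`-measurable
square-integrable variable, so `Var f = Var f̂ + Var r`, `Var g = Var ĝ + Var s` and
`Cov(f, g) = Cov(f̂, ĝ) + Cov(r, s)`. Cauchy–Schwarz for both pairs gives
`Cov(f, g)² ≤ x y` with `x = Var f̂ + Var s`, `y = Var ĝ + Var r`, hence
`x - y ≤ √((x + y)² - 4 Cov(f, g)²)`, which rearranges to the bound.
-/

open MeasureTheory ProbabilityTheory Real

/-- Variance of the conditional expectation `Var E[f | Z]`. -/
noncomputable def condVarExp {Ω γ : Type*} [MeasurableSpace Ω] [MeasurableSpace γ]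
    (μ : Measure Ω) (f : Ω → ℝ) (Z : Ω → γ) : ℝ :=
  ProbabilityTheory.variance (μ[f | MeasurableSpace.comap Z inferInstance]) μ

/-- Covariance `Cov(f,g)`. -/
noncomputable def cov {Ω : Type*} [MeasurableSpace Ω] (μ : Measure Ω) (f g : Ω → ℝ) : ℝ :=
  ∫ ω, (f ω - ∫ x, f x ∂μ) * (g ω - ∫ x, g x ∂μ) ∂μ

lemma add_sq_le_add_mul_add {a b c d A B : ℝ} (ha : 0 ≤ a) (hb : 0 ≤ b) (hA : 0 ≤ A)
    (hB : 0 ≤ B) (hc : c ^ 2 ≤ a * b) (hd : d ^ 2 ≤ A * B) :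
    (c + d) ^ 2 ≤ (a + B) * (b + A) := by
  have hcd : (c * d) ^ 2 ≤ (a * A) * (b * B) := by
    nlinarith [mul_le_mul hc hd (sq_nonneg d) (mul_nonneg ha hb)]
  have hcross : 2 * (c * d) ≤ a * A + b * B := by
    nlinarith [sq_nonneg (a * A - b * B), mul_nonneg ha hA, mul_nonneg hb hB]
  nlinarith

lemma sub_le_of_sq_le_mul_of_sq_le_mul {a b c d A B : ℝ} (ha : 0 ≤ a) (hb : 0 ≤ b) (hA : 0 ≤ A)
    (hB : 0 ≤ B) (hc : c ^ 2 ≤ a * b) (hd : d ^ 2 ≤ A * B) :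
    a - b ≤ (1 / 2) * ((a + A) - (b + B) + √(((a + A) + (b + B)) ^ 2 - 4 * (c + d) ^ 2)) := by
  have hcd := add_sq_le_add_mul_add ha hb hA hB hc hd
  have hsqrt : (a + B) - (b + A) ≤ √(((a + A) + (b + B)) ^ 2 - 4 * (c + d) ^ 2) :=
    (le_abs_self _).trans <| Real.abs_le_sqrt <| by nlinarith
  linarith

namespace ProbabilityTheory

variable {Ω : Type*} {m mΩ : MeasurableSpace Ω} {μ : Measure Ω} {X Y : Ω → ℝ}

lemma covariance_sq_le_variance_mul_variance [IsFiniteMeasure μ] (hX : MemLp X 2 μ)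
    (hY : MemLp Y 2 μ) : cov[X, Y; μ] ^ 2 ≤ Var[X; μ] * Var[Y; μ] := by
  have hdiscrim := discrim_le_zero (a := Var[Y; μ]) (b := 2 * cov[X, Y; μ]) (c := Var[X; μ])
    fun t ↦ by
      have := variance_nonneg (X + t • Y) μ
      rw [variance_add hX (hY.const_smul t), covariance_smul_right, variance_smul] at this
      linarith
  rw [discrim] at hdiscrim
  linarith

lemma covariance_condExp_right (hm : m ≤ mΩ) [IsProbabilityMeasure μ] {H : Ω → ℝ}
    (hHm : StronglyMeasurable[m] H) (hH : MemLp H 2 μ) (hY : MemLp Y 2 μ) :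
    cov[H, μ[Y | m]; μ] = cov[H, Y; μ] := by
  have hpull : μ[H * μ[Y | m]] = μ[H * Y] := by
    rw [← integral_condExp hm (f := H * Y)]
    exact integral_congr_ae
      (condExp_mul_of_stronglyMeasurable_left hHm (hH.integrable_mul hY)
        (hY.integrable one_le_two)).symm
  rw [covariance_eq_sub hH (hY.condExp one_le_two), covariance_eq_sub hH hY, hpull,
    integral_condExp hm]

lemma covariance_condExp_add_covariance_sub_condExp [IsProbabilityMeasure μ] (hX : MemLp X 2 μ)
    (hY : MemLp Y 2 μ) :
    cov[μ[X | m], μ[Y | m]; μ] + cov[X - μ[X | m], Y - μ[Y | m]; μ] = cov[X, Y; μ] := by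
  by_cases hm : m ≤ mΩ
  · have hXm := hX.condExp (m := m) one_le_two
    have hYm := hY.condExp (m := m) one_le_two
    rw [covariance_sub_sub hX hXm hY hYm,
      ← covariance_condExp_right hm stronglyMeasurable_condExp hXm hY,
      covariance_comm X (μ[Y | m]), ← covariance_condExp_right hm stronglyMeasurable_condExp hYm hX,
      covariance_comm (μ[Y | m])]
    ring
  · simp [condExp_of_not_le hm]

lemma variance_condExp_add_variance_sub_condExp [IsProbabilityMeasure μ] (hX : MemLp X 2 μ) :
    Var[μ[X | m]; μ] + Var[X - μ[X | m]; μ] = Var[X; μ] := by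
  have hXm := hX.condExp (m := m) one_le_two
  rw [← covariance_self hX.aemeasurable, ← covariance_self hXm.aemeasurable,
    ← covariance_self (hX.sub hXm).aemeasurable]
  exact covariance_condExp_add_covariance_sub_condExp hX hX

lemma variance_condExp_sub_variance_condExp_le [IsProbabilityMeasure μ] (hX : MemLp X 2 μ)
    (hY : MemLp Y 2 μ) :
    Var[μ[X | m]; μ] - Var[μ[Y | m]; μ] ≤ (1 / 2) * (Var[X; μ] - Var[Y; μ]
      + √((Var[X; μ] + Var[Y; μ]) ^ 2 - 4 * cov[X, Y; μ] ^ 2)) := by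
  have hXm := hX.condExp (m := m) one_le_two
  have hYm := hY.condExp (m := m) one_le_two
  rw [← covariance_condExp_add_covariance_sub_condExp hX hY,
    ← variance_condExp_add_variance_sub_condExp hX,
    ← variance_condExp_add_variance_sub_condExp hY]
  exact sub_le_of_sq_le_mul_of_sq_le_mul (variance_nonneg _ μ) (variance_nonneg _ μ)
    (variance_nonneg _ μ) (variance_nonneg _ μ) (covariance_sq_le_variance_mul_variance hXm hYm)
    (covariance_sq_le_variance_mul_variance (hX.sub hXm) (hY.sub hYm))

end ProbabilityTheory

/-- Upper bound:
`Var E[f|Z] − Var E[g|Z] ≤ ½[Var f − Var g + √((Var f + Var g)² − 4Cov(f,g)²)]`. -/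
theorem condVarExp_sub_upper_bound
    {Ω γ : Type*} [MeasurableSpace Ω] [MeasurableSpace γ]
    (μ : Measure Ω) [IsProbabilityMeasure μ]
    (f g : Ω → ℝ) (hf : MemLp f 2 μ) (hg : MemLp g 2 μ) (Z : Ω → γ) :
    condVarExp μ f Z - condVarExp μ g Z
      ≤ (1 / 2) * (variance f μ - variance g μ
          + Real.sqrt ((variance f μ + variance g μ) ^ 2 - 4 * (cov μ f g) ^ 2)) :=
  variance_condExp_sub_variance_condExp_le hf hg
end

section
/- Let f, g be square-integrable random variables with Var g > 0, and let Z be a random variable such that Var E[g|Z] = 0. Then Var E[f|Z] ≤ Var f − Cov(f,g)²/Var g. -/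
/-! Write `X = μ[X|m] + R`. Conditional expectation is self-adjoint, so
`cov[μ[X|m], Y] = cov[μ[X|m], μ[Y|m]]`: taking `Y = X` shows that `μ[X|m]` is uncorrelated with `R`,
and when `Var[μ[Y|m]] = 0` Cauchy–Schwarz shows that it is uncorrelated with `Y`. Hence
`Var[X] = Var[μ[X|m]] + Var[R]` and `cov[X, Y] = cov[R, Y]`, and Cauchy–Schwarz once more gives
`cov[X, Y]² ≤ Var[R] * Var[Y]`. -/

open MeasureTheory ProbabilityTheory Real

namespace ProbabilityTheory

variable {Ω : Type*} {m mΩ : MeasurableSpace Ω} {μ : Measure Ω} {X Y : Ω → ℝ}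

variable [IsProbabilityMeasure μ]

lemma covariance_condExp_left (hX : MemLp X 2 μ) (hY : MemLp Y 2 μ) :
    cov[μ[X|m], Y; μ] = cov[μ[X|m], μ[Y|m]; μ] := by
  by_cases hm : m ≤ mΩ
  swap
  · simp [condExp_of_not_le hm]
  have hXm := hX.condExp (m := m) one_le_two
  have hYm := hY.condExp (m := m) one_le_two
  have hpull : μ[μ[X|m] * Y|m] =ᵐ[μ] μ[X|m] * μ[Y|m] :=
    condExp_mul_of_stronglyMeasurable_left stronglyMeasurable_condExp (hXm.integrable_mul hY)
      (hY.integrable one_le_two)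
  rw [covariance_eq_sub hXm hY, covariance_eq_sub hXm hYm, integral_condExp hm,
    ← integral_condExp hm (f := μ[X|m] * Y), integral_congr_ae hpull, integral_condExp hm]

lemma covariance_condExp_self_left (hX : MemLp X 2 μ) :
    cov[μ[X|m], X; μ] = Var[μ[X|m]; μ] := by
  rw [covariance_condExp_left hX hX, covariance_self (hX.condExp one_le_two).aemeasurable]

lemma covariance_condExp_left_eq_zero (hX : MemLp X 2 μ) (hY : MemLp Y 2 μ)
    (hY0 : Var[μ[Y|m]; μ] = 0) : cov[μ[X|m], Y; μ] = 0 := by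
  have h := covariance_sq_le_variance_mul_variance (hX.condExp (m := m) one_le_two)
    (hY.condExp (m := m) one_le_two)
  rw [hY0, mul_zero, ← covariance_condExp_left hX hY] at h
  exact pow_eq_zero_iff two_ne_zero |>.mp (le_antisymm h (sq_nonneg _))

lemma variance_eq_variance_condExp_add (hX : MemLp X 2 μ) :
    Var[X; μ] = Var[μ[X|m]; μ] + Var[X - μ[X|m]; μ] := by
  have hXm := hX.condExp (m := m) one_le_two
  have horth : cov[μ[X|m], X - μ[X|m]; μ] = 0 := by
    rw [covariance_sub_right hXm hX hXm, covariance_condExp_self_left hX,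
      covariance_self hXm.aemeasurable, sub_self]
  conv_lhs => rw [← add_sub_cancel (μ[X|m]) X]
  rw [variance_add hXm (hX.sub hXm), horth]
  ring

lemma covariance_sub_condExp_left (hX : MemLp X 2 μ) (hY : MemLp Y 2 μ)
    (hY0 : Var[μ[Y|m]; μ] = 0) : cov[X - μ[X|m], Y; μ] = cov[X, Y; μ] := by
  rw [covariance_sub_left hX (hX.condExp one_le_two) hY,
    covariance_condExp_left_eq_zero hX hY hY0, sub_zero]

theorem variance_condExp_le_of_variance_condExp_eq_zero (hX : MemLp X 2 μ) (hY : MemLp Y 2 μ)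
    (hY0 : Var[μ[Y|m]; μ] = 0) :
    Var[μ[X|m]; μ] ≤ Var[X; μ] - cov[X, Y; μ] ^ 2 / Var[Y; μ] := by
  have hcs : cov[X, Y; μ] ^ 2 ≤ Var[X - μ[X|m]; μ] * Var[Y; μ] := by
    rw [← covariance_sub_condExp_left hX hY hY0]
    exact covariance_sq_le_variance_mul_variance (hX.sub (hX.condExp one_le_two)) hY
  have hdiv := div_le_of_le_mul₀ (variance_nonneg _ _) (variance_nonneg _ _) hcs
  linarith [variance_eq_variance_condExp_add (m := m) hX]

end ProbabilityTheory

theorem condVarExp_upper_of_invariance_general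
    {Ω γ : Type*} [MeasurableSpace Ω] [MeasurableSpace γ]
    (μ : Measure Ω) [IsProbabilityMeasure μ]
    (f g : Ω → ℝ) (hf : MemLp f 2 μ) (hg : MemLp g 2 μ)
    (Z : Ω → γ)
    (hZ : condVarExp μ g Z = 0) :
    condVarExp μ f Z ≤ variance f μ - (cov μ f g) ^ 2 / variance g μ :=
  variance_condExp_le_of_variance_condExp_eq_zero hf hg hZ

/-- If `Var E[g|Z] = 0` then `Var E[f|Z] ≤ Var f − Cov(f,g)²/Var g`. -/
theorem condVarExp_upper_of_invariance
    {Ω γ : Type*} [MeasurableSpace Ω] [MeasurableSpace γ]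
    (μ : Measure Ω) [IsProbabilityMeasure μ]
    (f g : Ω → ℝ) (hf : MemLp f 2 μ) (hg : MemLp g 2 μ)
    (hgv : 0 < variance g μ) (Z : Ω → γ)
    (hZ : condVarExp μ g Z = 0) :
    condVarExp μ f Z ≤ variance f μ - (cov μ f g) ^ 2 / variance g μ :=
  condVarExp_upper_of_invariance_general μ f g hf hg Z hZ
end

section
/- Let Y, A be binary random variables with joint distribution D, and define Δ_{Y|A} = |P(Y=1|A=0) − P(Y=1|A=1)|, with α = P(Y=1|A=0) ≤ β = P(Y=1|A=1). Construct Z ~ Uniform(0,1) independent of A, and define Y' = 1 if (Z ≤ α and A = 0) or (Z ≤ β and A = 1), else Y' = 0. Then (A, Y') has the same joint distribution as (A, Y), Z is independent of A, and H(Y'|Z) = (β − α)·H(A) = Δ_{Y|A}·H(A). -/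
open MeasureTheory ProbabilityTheory Real

/-- Shannon entropy of a random variable with values in a finite alphabet. -/
noncomputable def entropy {Ω α : Type*} [MeasurableSpace Ω] [Fintype α]
    (μ : Measure Ω) (X : Ω → α) : ℝ :=
  ∑ a : α, Real.negMulLog ((μ (X ⁻¹' {a})).toReal)

/-- `Δ_{Y|A} = |P(Y=1|A=0) − P(Y=1|A=1)|` for binary `A, Y`. -/
noncomputable def delta {Ω : Type*} [MeasurableSpace Ω]
    (μ : Measure Ω) (A Y : Ω → Bool) : ℝ :=
  |(μ[|A ⁻¹' {false}] (Y ⁻¹' {true})).toReal - (μ[|A ⁻¹' {true}] (Y ⁻¹' {true})).toReal|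

/-!
`Y'` is the conditional-quantile coupling `Y' = 𝟙{Z ≤ P(Y = 1 | A)}`: since `Z` is uniform on
`(0,1)` and independent of `A`, on each fibre `A = a` the event `Y' = 1` has probability
`P(Y = 1 | A = a)`, so `(A, Y')` has the law of `(A, Y)`. On `Z ≤ α` and on `Z > β` the value of
`Y'` is constant; on `α < Z ≤ β` it equals `A`, and this event has probability `β - α` and is
independent of `A`. Hence only the middle regime contributes, with entropy `H(A)`.
-/

open Set

instance : IsProbabilityMeasure (volume.restrict (Ioo (0 : ℝ) 1)) :=
  ⟨by simp⟩

lemma restrict_Ioo_zero_one_eq_restrict_Ioc :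
    volume.restrict (Ioo (0 : ℝ) 1) = volume.restrict (Ioc 0 1) :=
  Measure.restrict_congr_set Ioo_ae_eq_Ioc

lemma restrict_Ioo_zero_one_Ioc {a b : ℝ} (ha : 0 ≤ a) (hb : b ≤ 1) :
    volume.restrict (Ioo (0 : ℝ) 1) (Ioc a b) = ENNReal.ofReal (b - a) := by
  rw [restrict_Ioo_zero_one_eq_restrict_Ioc,
    Measure.restrict_eq_self _ (Ioc_subset_Ioc ha hb), Real.volume_Ioc]

lemma restrict_Ioo_zero_one_Iic {γ : ℝ} (h1 : γ ≤ 1) :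
    volume.restrict (Ioo (0 : ℝ) 1) (Iic γ) = ENNReal.ofReal γ := by
  rw [restrict_Ioo_zero_one_eq_restrict_Ioc, Measure.restrict_apply measurableSet_Iic,
    Iic_inter_Ioc_of_le h1, Real.volume_Ioc, sub_zero]

lemma restrict_Ioo_zero_one_Ioi {γ : ℝ} (h0 : 0 ≤ γ) (h1 : γ ≤ 1) :
    volume.restrict (Ioo (0 : ℝ) 1) (Ioi γ) = ENNReal.ofReal (1 - γ) := by
  rw [← compl_Iic, prob_compl_eq_one_sub measurableSet_Iic, restrict_Ioo_zero_one_Iic h1,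
    ← ENNReal.ofReal_one, ENNReal.ofReal_sub _ h0]

section Conditioning

variable {Ω : Type*} [MeasurableSpace Ω] {μ : Measure Ω} {s t : Set Ω}

lemma toReal_cond_le_one : (μ[|s] t).toReal ≤ 1 :=
  ENNReal.toReal_le_of_le_ofReal zero_le_one (by simpa using prob_le_one)

lemma measure_inter_eq_mul_ofReal_cond [IsFiniteMeasure μ] (hs : MeasurableSet s) (t : Set Ω) :
    μ (s ∩ t) = μ s * ENNReal.ofReal (μ[|s] t).toReal := by
  rw [ENNReal.ofReal_toReal (measure_ne_top _ _), mul_comm, cond_mul_eq_inter hs]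

lemma measure_inter_compl_eq_mul_ofReal_one_sub_cond [IsFiniteMeasure μ] (hs : MeasurableSet s)
    (ht : MeasurableSet t) :
    μ (s ∩ tᶜ) = μ s * ENNReal.ofReal (1 - (μ[|s] t).toReal) := by
  rw [ENNReal.ofReal_sub _ ENNReal.toReal_nonneg, ENNReal.ofReal_one,
    ENNReal.ofReal_toReal (measure_ne_top _ _), ENNReal.mul_sub (fun _ _ ↦ measure_ne_top _ _),
    mul_one, mul_comm, cond_mul_eq_inter hs]
  refine ENNReal.eq_sub_of_add_eq (measure_ne_top _ _) ?_
  rw [add_comm, ← sdiff_eq, measure_inter_add_sdiff s ht]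

end Conditioning

theorem map_prod_uniform_threshold {Ω ι : Type*} [MeasurableSpace Ω] [MeasurableSpace ι]
    [Countable ι] [MeasurableSingletonClass ι] (μ : Measure Ω) [IsFiniteMeasure μ]
    {A : Ω → ι} {Y : Ω → Bool} (hA : Measurable A) (hY : Measurable Y) :
    (μ.prod (volume.restrict (Ioo (0 : ℝ) 1))).map
        (fun p ↦ (A p.1, decide (p.2 ≤ (μ[|A ⁻¹' {A p.1}] (Y ⁻¹' {true})).toReal)))
      = μ.map (fun ω ↦ (A ω, Y ω)) := by
  set t : ι → ℝ := fun a ↦ (μ[|A ⁻¹' {a}] (Y ⁻¹' {true})).toReal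
  have ht0 (a : ι) : 0 ≤ t a := ENNReal.toReal_nonneg
  have ht1 (a : ι) : t a ≤ 1 := toReal_cond_le_one
  have hmeas : Measurable fun p : Ω × ℝ ↦ (A p.1, decide (p.2 ≤ t (A p.1))) := by
    refine (measurable_from_prod_countable_left (f := fun q : ℝ × ι ↦ (q.2, decide (q.1 ≤ t q.2)))
      fun a ↦ measurable_const.prodMk (measurable_to_bool ?_)).comp
      (measurable_snd.prodMk (hA.comp measurable_fst))
    convert measurableSet_Iic (a := t a)
    ext z; simp
  rw [Measure.ext_iff_singleton]
  rintro ⟨a, b⟩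
  rw [Measure.map_apply hmeas (measurableSet_singleton _),
    Measure.map_apply (hA.prodMk hY) (measurableSet_singleton _)]
  have hfib : (fun p : Ω × ℝ ↦ (A p.1, decide (p.2 ≤ t (A p.1)))) ⁻¹' {(a, b)}
      = (A ⁻¹' {a}) ×ˢ {z | decide (z ≤ t a) = b} := by
    ext ⟨ω, z⟩
    simp only [mem_preimage, mem_singleton_iff, Prod.mk.injEq, mem_prod, mem_ofPred_eq]
    constructor <;> rintro ⟨rfl, h⟩ <;> exact ⟨rfl, h⟩
  have hA_a : MeasurableSet (A ⁻¹' {a}) := hA (measurableSet_singleton a)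
  rw [hfib, Measure.prod_prod]
  cases b
  · have hY_false : (fun ω ↦ (A ω, Y ω)) ⁻¹' {(a, false)} = A ⁻¹' {a} ∩ (Y ⁻¹' {true})ᶜ := by
      ext ω; simp
    rw [hY_false,
      measure_inter_compl_eq_mul_ofReal_one_sub_cond hA_a (hY (measurableSet_singleton _)),
      ← restrict_Ioo_zero_one_Ioi (ht0 a) (ht1 a)]
    congr 2
    ext z; simp
  · have hY_true : (fun ω ↦ (A ω, Y ω)) ⁻¹' {(a, true)} = A ⁻¹' {a} ∩ Y ⁻¹' {true} := by
      ext ω; simp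
    rw [hY_true, measure_inter_eq_mul_ofReal_cond hA_a, ← restrict_Ioo_zero_one_Iic (ht1 a)]
    congr 2
    ext z; simp

section Entropy

variable {Ω γ : Type*} [MeasurableSpace Ω] [Fintype γ]

lemma entropy_const (μ : Measure Ω) [IsZeroOrProbabilityMeasure μ] (c : γ) :
    entropy μ (fun _ ↦ c) = 0 := by
  refine Fintype.sum_eq_zero _ fun a ↦ ?_
  classical
  rcases eq_zero_or_isProbabilityMeasure μ with rfl | _
  · simp
  · by_cases h : c = a <;> simp [h]

lemma entropy_cond_congr (μ : Measure Ω) {s : Set Ω} (hs : MeasurableSet s) {f g : Ω → γ}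
    (hfg : EqOn f g s) : entropy (μ[|s]) f = entropy (μ[|s]) g := by
  simp only [entropy, cond_apply hs, hfg.inter_preimage_eq]

lemma entropy_cond_eq_zero_of_eqOn_const (μ : Measure Ω) {s : Set Ω} (hs : MeasurableSet s)
    {f : Ω → γ} {c : γ} (hf : ∀ ω ∈ s, f ω = c) : entropy (μ[|s]) f = 0 := by
  rw [entropy_cond_congr μ hs (g := fun _ ↦ c) hf, entropy_const]

end Entropy

section Product

variable {Ω Ω' γ : Type*} [MeasurableSpace Ω] [MeasurableSpace Ω']
  (μ : Measure Ω) (ν : Measure Ω')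

lemma cond_prod_preimage_snd [IsProbabilityMeasure μ] [IsFiniteMeasure ν] {S : Set Ω'}
    (hS : MeasurableSet S) : (μ.prod ν)[|Prod.snd ⁻¹' S] = μ.prod (ν[|S]) := by
  refine (Measure.prod_eq fun s t _ _ ↦ ?_).symm
  rw [cond_apply (measurable_snd hS), cond_apply hS, ← univ_prod, prod_inter_prod, univ_inter,
    Measure.prod_prod, Measure.prod_prod, measure_univ, one_mul, mul_left_comm]

lemma entropy_prod_comp_fst [Fintype γ] [IsProbabilityMeasure ν] (X : Ω → γ) :
    entropy (μ.prod ν) (fun p ↦ X p.1) = entropy μ X := by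
  simp only [entropy]
  congr! with a
  rw [show (fun p : Ω × Ω' ↦ X p.1) ⁻¹' {a} = (X ⁻¹' {a}) ×ˢ univ by rw [prod_univ]; rfl,
    Measure.prod_prod, measure_univ, mul_one]

lemma indepFun_comp_snd_comp_fst [IsProbabilityMeasure μ] [IsProbabilityMeasure ν]
    {β β' : Type*} [MeasurableSpace β] [MeasurableSpace β'] (f : Ω' → β) (g : Ω → β') :
    IndepFun (fun p ↦ f p.2) (fun p ↦ g p.1) (μ.prod ν) := by
  rw [indepFun_iff_measure_inter_preimage_eq_mul]
  intro s t _ _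
  rw [show (fun p : Ω × Ω' ↦ f p.2) ⁻¹' s = univ ×ˢ (f ⁻¹' s) by rw [univ_prod]; rfl,
    show (fun p : Ω × Ω' ↦ g p.1) ⁻¹' t = (g ⁻¹' t) ×ˢ univ by rw [prod_univ]; rfl,
    prod_inter_prod, univ_inter, inter_univ, Measure.prod_prod, Measure.prod_prod,
    Measure.prod_prod, measure_univ, measure_univ, one_mul, mul_one, mul_comm]

end Product

theorem entropy_cond_three_regimes {Ω γ : Type*} [MeasurableSpace Ω] [Fintype γ]
    (μ : Measure Ω) [IsProbabilityMeasure μ] {α β : ℝ} (hα : 0 ≤ α) (hαβ : α ≤ β) (hβ : β ≤ 1)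
    (X : Ω → γ) (Y : Ω × ℝ → γ) {c₀ c₁ : γ} (hlow : ∀ p : Ω × ℝ, p.2 ≤ α → Y p = c₁)
    (hmid : ∀ p : Ω × ℝ, α < p.2 → p.2 ≤ β → Y p = X p.1)
    (hhigh : ∀ p : Ω × ℝ, β < p.2 → Y p = c₀) :
    ((μ.prod (volume.restrict (Ioo (0 : ℝ) 1))) {p | p.2 ≤ α}).toReal
        * entropy ((μ.prod (volume.restrict (Ioo (0 : ℝ) 1)))[|{p | p.2 ≤ α}]) Y
      + ((μ.prod (volume.restrict (Ioo (0 : ℝ) 1))) {p | α < p.2 ∧ p.2 ≤ β}).toReal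
        * entropy ((μ.prod (volume.restrict (Ioo (0 : ℝ) 1)))[|{p | α < p.2 ∧ p.2 ≤ β}]) Y
      + ((μ.prod (volume.restrict (Ioo (0 : ℝ) 1))) {p | β < p.2}).toReal
        * entropy ((μ.prod (volume.restrict (Ioo (0 : ℝ) 1)))[|{p | β < p.2}]) Y
      = (β - α) * entropy μ X := by
  set ν := volume.restrict (Ioo (0 : ℝ) 1)
  have hlowS : MeasurableSet {p : Ω × ℝ | p.2 ≤ α} := measurable_snd measurableSet_Iic
  have hhighS : MeasurableSet {p : Ω × ℝ | β < p.2} := measurable_snd measurableSet_Ioi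
  rw [entropy_cond_eq_zero_of_eqOn_const _ hlowS hlow,
    entropy_cond_eq_zero_of_eqOn_const _ hhighS hhigh,
    mul_zero, mul_zero, zero_add, add_zero]
  change (μ.prod ν (Prod.snd ⁻¹' Ioc α β)).toReal * entropy ((μ.prod ν)[|Prod.snd ⁻¹' Ioc α β]) Y
    = _
  have hν : ν (Ioc α β) = ENNReal.ofReal (β - α) := restrict_Ioo_zero_one_Ioc hα hβ
  rw [entropy_cond_congr _ (measurable_snd measurableSet_Ioc) (fun p hp ↦ hmid p hp.1 hp.2),
    cond_prod_preimage_snd _ _ measurableSet_Ioc, ← univ_prod, Measure.prod_prod, measure_univ,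
    one_mul, hν, ENNReal.toReal_ofReal (sub_nonneg.2 hαβ)]
  rcases hαβ.eq_or_lt with rfl | hlt
  · simp
  · have : IsProbabilityMeasure (ν[|Ioc α β]) :=
      cond_isProbabilityMeasure (by simpa [hν] using hlt)
    rw [entropy_prod_comp_fst]

theorem achievability_construction_general
    {Ω : Type*} [MeasurableSpace Ω] (μ : Measure Ω) [IsProbabilityMeasure μ]
    (A Y : Ω → Bool) (hAm : Measurable A) (hYm : Measurable Y)
    (α β : ℝ)
    (hα : α = (μ[|A ⁻¹' {false}] (Y ⁻¹' {true})).toReal)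
    (hβ : β = (μ[|A ⁻¹' {true}] (Y ⁻¹' {true})).toReal)
    (hαβ : α ≤ β)
    (μ' : Measure (Ω × ℝ))
    (hμ' : μ' = μ.prod (volume.restrict (Set.Ioo (0 : ℝ) 1)))
    (A' : Ω × ℝ → Bool) (hA' : A' = fun p => A p.1)
    (Z : Ω × ℝ → ℝ) (hZ : Z = fun p => p.2)
    (Y' : Ω × ℝ → Bool)
    (hY' : Y' = fun p =>
      if (Z p ≤ α ∧ A' p = false) ∨ (Z p ≤ β ∧ A' p = true) then true else false) :
    Measure.map (fun p => (A' p, Y' p)) μ' = Measure.map (fun ω => (A ω, Y ω)) μ ∧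
    ProbabilityTheory.IndepFun Z A' μ' ∧
    (μ' {p | Z p ≤ α}).toReal * entropy (μ'[|{p | Z p ≤ α}]) Y'
      + (μ' {p | α < Z p ∧ Z p ≤ β}).toReal * entropy (μ'[|{p | α < Z p ∧ Z p ≤ β}]) Y'
      + (μ' {p | β < Z p}).toReal * entropy (μ'[|{p | β < Z p}]) Y'
      = (β - α) * entropy μ A ∧
    β - α = delta μ A Y := by
  subst hμ' hA' hZ hY'
  have hY'_threshold (p : Ω × ℝ) :
      ((p.2 ≤ α ∧ A p.1 = false) ∨ (p.2 ≤ β ∧ A p.1 = true))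
        ↔ p.2 ≤ (μ[|A ⁻¹' {A p.1}] (Y ⁻¹' {true})).toReal := by
    cases A p.1 <;> simp [hα, hβ]
  refine ⟨?_, indepFun_comp_snd_comp_fst _ _ id A, ?_, ?_⟩
  · simpa only [hY'_threshold, Bool.if_false_right, Bool.and_true]
      using map_prod_uniform_threshold μ hAm hYm
  · refine entropy_cond_three_regimes μ (hα ▸ ENNReal.toReal_nonneg) hαβ
      (hβ ▸ toReal_cond_le_one) A _ (c₁ := true) (c₀ := false) ?_ ?_ ?_
    · intro p hp
      cases A p.1 <;> simp [hp, hp.trans hαβ]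
    · intro p hαp hpβ
      cases h : A p.1 <;> simp [h, hαp.not_ge, hpβ]
    · intro p hβp
      simp [hβp.not_ge, (hαβ.trans_lt hβp).not_ge]
  · rw [delta, ← hα, ← hβ, abs_sub_comm, abs_of_nonneg (sub_nonneg.2 hαβ)]

/-- Achievability construction: with `Z ~ Uniform(0,1)` independent of `A` and
`Y' = 1` iff (`Z ≤ α` and `A = 0`) or (`Z ≤ β` and `A = 1`), the pair `(A, Y')`
has the same joint law as `(A, Y)`, `Z` is independent of `A`, and the conditional
entropy `H(Y'|Z)` (computed over the three regimes `Z ≤ α`, `α < Z ≤ β`, `Z > β`)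
equals `(β − α)·H(A) = Δ_{Y|A}·H(A)`. -/
theorem achievability_construction
    {Ω : Type*} [MeasurableSpace Ω] (μ : Measure Ω) [IsProbabilityMeasure μ]
    (A Y : Ω → Bool) (hAm : Measurable A) (hYm : Measurable Y)
    (hA0 : μ (A ⁻¹' {false}) ≠ 0) (hA1 : μ (A ⁻¹' {true}) ≠ 0)
    (α β : ℝ)
    (hα : α = (μ[|A ⁻¹' {false}] (Y ⁻¹' {true})).toReal)
    (hβ : β = (μ[|A ⁻¹' {true}] (Y ⁻¹' {true})).toReal)
    (hαβ : α ≤ β)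
    (μ' : Measure (Ω × ℝ))
    (hμ' : μ' = μ.prod (volume.restrict (Set.Ioo (0 : ℝ) 1)))
    (A' : Ω × ℝ → Bool) (hA' : A' = fun p => A p.1)
    (Z : Ω × ℝ → ℝ) (hZ : Z = fun p => p.2)
    (Y' : Ω × ℝ → Bool)
    (hY' : Y' = fun p =>
      if (Z p ≤ α ∧ A' p = false) ∨ (Z p ≤ β ∧ A' p = true) then true else false) :
    Measure.map (fun p => (A' p, Y' p)) μ' = Measure.map (fun ω => (A ω, Y ω)) μ ∧
    ProbabilityTheory.IndepFun Z A' μ' ∧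
    (μ' {p | Z p ≤ α}).toReal * entropy (μ'[|{p | Z p ≤ α}]) Y'
      + (μ' {p | α < Z p ∧ Z p ≤ β}).toReal * entropy (μ'[|{p | α < Z p ∧ Z p ≤ β}]) Y'
      + (μ' {p | β < Z p}).toReal * entropy (μ'[|{p | β < Z p}]) Y'
      = (β - α) * entropy μ A ∧
    β - α = delta μ A Y :=
  achievability_construction_general μ A Y hAm hYm α β hα hβ hαβ μ' hμ' A' hA' Z hZ Y' hY'
end
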